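/- Let U ⊆ ℝ^k be open, let φ: U → ℝ^{n−k} be C^1, and let Σ(u) = (u, φ(u)) ∈ ℝ^n be the graph map, whose image S is a k-dimensional submanifold. Set π = ℝ^k × {0} ⊂ ℝ^n and let J(u) = √(det G(u)) where G(u) is the Gram matrix of the partial derivatives ∂Σ/∂u_1,…,∂Σ/∂u_k. Then for every u ∈ U, J(u) · |T_{Σ(u)}S ∧ π^⊥| = 1, where T_{Σ(u)}S = span{∂Σ/∂u_1(u),…,∂Σ/∂u_k(u)} and |V ∧ W| is defined via orthonormal bases. -/

import Mathlib

/-! Write `p i = ∂Σ/∂u_i` and `e j` for the last `m` standard basis vectors. Expanding in the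
orthonormal families gives `[p | e] = [a | b] · diag(C, D)` with `C = (⟪a j, p i⟫)` and
`D = (⟪b j, e j'⟫)`. The Gram matrix of `p` is `CᵀC`, so `J = |det C|`; the Gram matrix of `e`
is `DᵀD = 1`, so `|det D| = 1`; and `[p | e]` is block lower unitriangular, since the first `k`
coordinates of `p i` are those of the `i`-th basis vector, so `det [p | e] = 1`. -/

open RealInnerProductSpace Module

/-- The graph map `Σ(u) = (u, φ(u)) ∈ ℝ^{k+m}` of `φ : ℝ^k → ℝ^m`. -/
noncomputable def graphMap {k m : ℕ}
    (φ : EuclideanSpace ℝ (Fin k) → EuclideanSpace ℝ (Fin m)) :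
    EuclideanSpace ℝ (Fin k) → EuclideanSpace ℝ (Fin (k + m)) :=
  fun x => (WithLp.equiv 2 (Fin (k + m) → ℝ)).symm
    (Fin.append (fun i => x i) (fun i => φ x i))

/-- The partial derivative `∂Σ/∂u_i` of the graph map at `u`. -/
noncomputable def graphPartial {k m : ℕ}
    (φ : EuclideanSpace ℝ (Fin k) → EuclideanSpace ℝ (Fin m))
    (u : EuclideanSpace ℝ (Fin k)) (i : Fin k) : EuclideanSpace ℝ (Fin (k + m)) :=
  fderiv ℝ (graphMap φ) u (EuclideanSpace.single i 1)

/-- The Jacobian `J(u) = √(det G(u))`, where `G(u)` is the Gram matrix of the partial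
derivatives `∂Σ/∂u_1,…,∂Σ/∂u_k`. -/
noncomputable def graphJacobian {k m : ℕ}
    (φ : EuclideanSpace ℝ (Fin k) → EuclideanSpace ℝ (Fin m))
    (u : EuclideanSpace ℝ (Fin k)) : ℝ :=
  Real.sqrt (Matrix.det (Matrix.of fun i j =>
    ⟪graphPartial φ u i, graphPartial φ u j⟫))

open Matrix Submodule Set

section Orthonormal

variable {E ι κ : Type*} [NormedAddCommGroup E] [InnerProductSpace ℝ E]

def innerMatrix (a : ι → E) (v : κ → E) : Matrix ι κ ℝ := of fun j i => ⟪a j, v i⟫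

variable [Fintype ι] {a : ι → E}

theorem Orthonormal.sum_inner_smul_of_mem_span (ha : Orthonormal ℝ a) {v : E}
    (hv : v ∈ span ℝ (range a)) : ∑ j, ⟪a j, v⟫ • a j = v := by
  obtain ⟨c, rfl⟩ := (mem_span_range_iff_exists_fun ℝ).mp hv
  simp only [ha.inner_right_fintype]

theorem Orthonormal.gram_eq_transpose_mul_self (ha : Orthonormal ℝ a) {v : κ → E}
    (hv : ∀ i, v i ∈ span ℝ (range a)) :
    gram ℝ v = (innerMatrix a v)ᵀ * innerMatrix a v := by
  ext i i'
  rw [gram_apply, ← ha.sum_inner_smul_of_mem_span (hv i), sum_inner]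
  simp only [real_inner_smul_left, mul_apply, transpose_apply, innerMatrix, of_apply]

theorem Orthonormal.abs_det_innerMatrix [DecidableEq ι] (ha : Orthonormal ℝ a) {v : ι → E}
    (hv : ∀ i, v i ∈ span ℝ (range a)) :
    |det (innerMatrix a v)| = √(det (gram ℝ v)) := by
  rw [ha.gram_eq_transpose_mul_self hv, det_mul, det_transpose, Real.sqrt_mul_self_eq_abs]

theorem Orthonormal.abs_det_innerMatrix_eq_one [DecidableEq ι] (ha : Orthonormal ℝ a)
    {b : ι → E} (hb : Orthonormal ℝ b) (hba : ∀ i, b i ∈ span ℝ (range a)) :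
    |det (innerMatrix a b)| = 1 := by
  have : gram ℝ b = 1 := by
    ext i j
    rw [gram_apply, orthonormal_iff_ite.mp hb, one_apply]
  rw [ha.abs_det_innerMatrix hba, this, det_one, Real.sqrt_one]

end Orthonormal

section Euclidean

variable {n ι κ : Type*} [Fintype ι]

def colMatrix (v : ι → EuclideanSpace ℝ n) : Matrix n ι ℝ := of fun l j => v j l

theorem Orthonormal.colMatrix_eq_mul_innerMatrix [Fintype n] {a : ι → EuclideanSpace ℝ n}
    (ha : Orthonormal ℝ a) {v : κ → EuclideanSpace ℝ n} (hv : ∀ i, v i ∈ span ℝ (range a)) :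
    colMatrix v = colMatrix a * innerMatrix a v := by
  ext l i
  conv_lhs => rw [colMatrix, of_apply, ← ha.sum_inner_smul_of_mem_span (hv i)]
  simp only [WithLp.ofLp_sum, Finset.sum_apply, WithLp.ofLp_smul, Pi.smul_apply, smul_eq_mul,
    mul_apply, colMatrix, innerMatrix, of_apply, mul_comm]

theorem colMatrix_append {k m : ℕ} (v : Fin k → EuclideanSpace ℝ n)
    (w : Fin m → EuclideanSpace ℝ n) :
    colMatrix (Fin.append v w) = (fromCols (colMatrix v) (colMatrix w)).submatrix id
      finSumFinEquiv.symm := by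
  ext l c
  refine Fin.addCases (fun i => ?_) (fun j => ?_) c <;> simp [colMatrix]

theorem det_colMatrix_append {k m : ℕ} {a v : Fin k → EuclideanSpace ℝ (Fin (k + m))}
    {b w : Fin m → EuclideanSpace ℝ (Fin (k + m))} (ha : Orthonormal ℝ a)
    (hb : Orthonormal ℝ b) (hv : ∀ i, v i ∈ span ℝ (range a))
    (hw : ∀ j, w j ∈ span ℝ (range b)) :
    det (colMatrix (Fin.append v w)) =
      det (colMatrix (Fin.append a b)) * det (innerMatrix a v) * det (innerMatrix b w) := by
  have hfactor : colMatrix (Fin.append v w) = colMatrix (Fin.append a b) *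
      (fromBlocks (innerMatrix a v) 0 0 (innerMatrix b w)).submatrix finSumFinEquiv.symm
        finSumFinEquiv.symm := by
    rw [colMatrix_append, colMatrix_append, submatrix_mul_equiv, fromCols_mul_fromBlocks,
      ha.colMatrix_eq_mul_innerMatrix hv, hb.colMatrix_eq_mul_innerMatrix hw]
    simp
  rw [hfactor, det_mul, det_submatrix_equiv_self, det_fromBlocks_zero₁₂, mul_assoc]

end Euclidean

section Graph

variable {k m : ℕ} {φ : EuclideanSpace ℝ (Fin k) → EuclideanSpace ℝ (Fin m)}
  {u : EuclideanSpace ℝ (Fin k)}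

theorem differentiableAt_graphMap (hφ : DifferentiableAt ℝ φ u) :
    DifferentiableAt ℝ (graphMap φ) u := by
  refine differentiableAt_euclidean.2 fun l => Fin.addCases (fun r => ?_) (fun j => ?_) l
  · simpa [graphMap] using (PiLp.hasFDerivAt_apply 2 u r).differentiableAt
  · simpa [graphMap] using differentiableAt_euclidean.1 hφ j

theorem graphPartial_castAdd (hφ : DifferentiableAt ℝ φ u) (i r : Fin k) :
    graphPartial φ u i (Fin.castAdd m r) = if r = i then 1 else 0 := by
  have hcoord : HasFDerivAt (fun x => graphMap φ x (Fin.castAdd m r))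
      (PiLp.proj (𝕜 := ℝ) 2 (fun _ => ℝ) (Fin.castAdd m r) ∘L fderiv ℝ (graphMap φ) u) u :=
    (PiLp.hasFDerivAt_apply (𝕜 := ℝ) 2 (graphMap φ u) (Fin.castAdd m r)).comp u
      (differentiableAt_graphMap hφ).hasFDerivAt
  have hproj : HasFDerivAt (fun x => graphMap φ x (Fin.castAdd m r))
      (PiLp.proj (𝕜 := ℝ) 2 (fun _ => ℝ) r) u := by
    simpa [graphMap] using PiLp.hasFDerivAt_apply (𝕜 := ℝ) 2 u r
  simpa [graphPartial] using congrArg (· (EuclideanSpace.single i 1)) (hcoord.unique hproj)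

theorem det_colMatrix_graphPartial_append (hφ : DifferentiableAt ℝ φ u) :
    det (colMatrix (Fin.append (graphPartial φ u)
      fun j => EuclideanSpace.single (Fin.natAdd k j) (1 : ℝ))) = 1 := by
  rw [← det_submatrix_equiv_self finSumFinEquiv]
  have hblock : (colMatrix (Fin.append (graphPartial φ u)
      fun j => EuclideanSpace.single (Fin.natAdd k j) (1 : ℝ))).submatrix finSumFinEquiv
        finSumFinEquiv =
      fromBlocks 1 0 (of fun j i => graphPartial φ u i (Fin.natAdd k j)) 1 := by
    ext (r | j) (i | j') <;>
      simp [colMatrix, graphPartial_castAdd hφ, one_apply, eq_comm, Fin.ext_iff]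
    omega
  rw [hblock, det_fromBlocks_zero₁₂, det_one, det_one, one_mul]

end Graph

/-- For the graph `S = {(u, φ(u))}` of a `C¹` map `φ : U → ℝ^{n−k}` over
`π = ℝ^k × {0}`, one has `J(u) · |T_{Σ(u)}S ∧ π^⊥| = 1` at every `u ∈ U`, where
`T_{Σ(u)}S = span{∂Σ/∂u_i}`, `π^⊥ = {0} × ℝ^{n−k}` is spanned by the last `n−k` standard
basis vectors, and `|V ∧ W|` is the absolute determinant of concatenated orthonormal bases. -/
theorem stmt7 (k m : ℕ) (U : Set (EuclideanSpace ℝ (Fin k))) (hU : IsOpen U)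
    (φ : EuclideanSpace ℝ (Fin k) → EuclideanSpace ℝ (Fin m))
    (hφ : ContDiffOn ℝ 1 φ U)
    (u : EuclideanSpace ℝ (Fin k)) (hu : u ∈ U)
    (a : Fin k → EuclideanSpace ℝ (Fin (k + m)))
    (b : Fin m → EuclideanSpace ℝ (Fin (k + m)))
    (ha : Orthonormal ℝ a) (hb : Orthonormal ℝ b)
    (haT : Submodule.span ℝ (Set.range a) =
      Submodule.span ℝ (Set.range (graphPartial φ u)))
    (hbP : Submodule.span ℝ (Set.range b) =
      Submodule.span ℝ (Set.range fun j : Fin m =>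
        (EuclideanSpace.single (Fin.natAdd k j) (1 : ℝ) : EuclideanSpace ℝ (Fin (k + m))))) :
    graphJacobian φ u * |(Matrix.of fun i j => Fin.append a b j i).det| = 1 := by
  have hd : DifferentiableAt ℝ φ u :=
    (hφ.differentiableOn one_ne_zero).differentiableAt (hU.mem_nhds hu)
  have he : Orthonormal ℝ fun j : Fin m => EuclideanSpace.single (Fin.natAdd k j) (1 : ℝ) := by
    simpa [Function.comp_def] using
      (EuclideanSpace.basisFun _ ℝ).orthonormal.comp _ (Fin.natAdd_injective m k)
  have hpa : ∀ i, graphPartial φ u i ∈ span ℝ (range a) :=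
    fun i => haT ▸ subset_span (mem_range_self i)
  have heb : ∀ j, EuclideanSpace.single (Fin.natAdd k j) (1 : ℝ) ∈ span ℝ (range b) :=
    fun j => hbP ▸ subset_span (mem_range_self j)
  have hdet := det_colMatrix_append ha hb hpa heb
  rw [det_colMatrix_graphPartial_append hd] at hdet
  have hJ : graphJacobian φ u = |det (innerMatrix a (graphPartial φ u))| :=
    (ha.abs_det_innerMatrix hpa).symm
  calc graphJacobian φ u * |det (colMatrix (Fin.append a b))|
      = |det (colMatrix (Fin.append a b)) * det (innerMatrix a (graphPartial φ u)) *
          det (innerMatrix b _)| := by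
        rw [abs_mul, abs_mul, hJ, hb.abs_det_innerMatrix_eq_one he heb]; ring
    _ = 1 := by rw [← hdet, abs_one]
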